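/- For the function D(N) = Σ_{r=1}^∞ ‖N/2^r‖ (equal to N times the star discrepancy of the binary van der Corput sequence), one has (1/M) Σ_{N=1}^M D(N) = (log M)/(4 log 2) + O(1) as M → ∞. -/

import Mathlib

open scoped Classical
open Filter

/-- Distance to the nearest integer. -/
noncomputable def nint (x : ℝ) : ℝ := |x - round x|

/-- `D(N) = ∑_{r ≥ 1} ‖N / 2 ^ r‖`, which equals `N` times the star discrepancy of the
binary van der Corput sequence. -/
noncomputable def Dvdc (N : ℕ) : ℝ := ∑' r : ℕ, nint ((N : ℝ) / 2 ^ (r + 1))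

lemma nint_nonneg (x : ℝ) : 0 ≤ nint x := abs_nonneg _
lemma nint_le_half (x : ℝ) : nint x ≤ 1/2 := abs_sub_round x
lemma nint_eq_min (x : ℝ) : nint x = min (Int.fract x) (1 - Int.fract x) :=
  abs_sub_round_eq_min x
lemma nint_zero : nint 0 = 0 := by simp [nint]

lemma nint_le_self {x : ℝ} (hx : 0 ≤ x) : nint x ≤ x := by
  rcases le_or_gt (1/2) x with h | h
  · exact (nint_le_half x).trans h
  · rw [nint_eq_min]
    have h1 : Int.fract x = x := Int.fract_eq_self.mpr ⟨hx, by linarith⟩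
    rw [h1]; exact min_le_left _ _

lemma nint_add_half (x : ℝ) : nint x + nint (x + 1/2) = 1/2 := by
  rw [nint_eq_min, nint_eq_min]
  have hf0 : 0 ≤ Int.fract x := Int.fract_nonneg x
  have hf1 : Int.fract x < 1 := Int.fract_lt_one x
  have hd : x + 1/2 = (⌊x⌋ : ℝ) + (Int.fract x + 1/2) := by
    rw [Int.fract]; ring
  rcases lt_or_ge (Int.fract x) (1/2) with h | h
  · have h2 : Int.fract (x + 1/2) = Int.fract x + 1/2 := by
      rw [hd, Int.fract_intCast_add, Int.fract_eq_self.mpr ⟨by linarith, by linarith⟩]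
    rw [h2, min_eq_left (by linarith), min_eq_right (by linarith)]
    ring
  · have h2 : Int.fract (x + 1/2) = Int.fract x - 1/2 := by
      have : Int.fract x + 1/2 = (Int.fract x - 1/2) + (1:ℤ) := by push_cast; ring
      rw [hd, Int.fract_intCast_add, this, Int.fract_add_intCast,
        Int.fract_eq_self.mpr ⟨by linarith, by linarith⟩]
    rw [h2, min_eq_right (by linarith), min_eq_left (by linarith)]
    ring

lemma nint_add_nat (x : ℝ) (n : ℕ) : nint (x + n) = nint x := by
  simp [nint, round_add_natCast]

lemma period_sum {q : ℕ} (hq : 1 ≤ q) :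
    ∑ k ∈ Finset.range (2*q), nint ((k:ℝ) / (2*q)) = q/2 := by
  have hq' : (0:ℝ) < 2*q := by positivity
  rw [two_mul, Finset.sum_range_add]
  rw [← Finset.sum_add_distrib]
  have : ∀ k ∈ Finset.range q,
      nint ((k:ℝ)/(2*q)) + nint (((q+k:ℕ):ℝ)/(2*q)) = 1/2 := by
    intro k _
    have : ((q+k:ℕ):ℝ)/(2*q) = (k:ℝ)/(2*q) + 1/2 := by
      push_cast; field_simp; ring
    rw [this, nint_add_half]
  rw [Finset.sum_congr rfl this]
  simp
  ring

lemma shift_period_sum {q : ℕ} (hq : 1 ≤ q) (m : ℕ) :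
    ∑ i ∈ Finset.Ico m (m + 2*q), nint ((i:ℝ) / (2*q)) = q/2 := by
  induction m with
  | zero =>
    rw [zero_add, ← Finset.range_eq_Ico]
    exact period_sum hq
  | succ m ih =>
    have h1 : m < m + 2*q := by omega
    have h2 : m + 1 ≤ m + 2*q := by omega
    have htop : ∑ i ∈ Finset.Ico (m+1) (m+1+2*q), nint ((i:ℝ)/(2*q))
        = (∑ i ∈ Finset.Ico (m+1) (m+2*q), nint ((i:ℝ)/(2*q)))
          + nint (((m+2*q:ℕ):ℝ)/(2*q)) := by
      have : m+1+2*q = (m+2*q)+1 := by omega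
      rw [this, Finset.sum_Ico_succ_top h2]
    have hbot : ∑ i ∈ Finset.Ico m (m + 2*q), nint ((i:ℝ)/(2*q))
        = nint ((m:ℝ)/(2*q)) + ∑ i ∈ Finset.Ico (m+1) (m+2*q), nint ((i:ℝ)/(2*q)) :=
      Finset.sum_eq_sum_Ico_succ_bot h1 _
    have hper : nint (((m+2*q:ℕ):ℝ)/(2*q)) = nint ((m:ℝ)/(2*q)) := by
      have hq' : (0:ℝ) < 2*q := by positivity
      have : ((m+2*q:ℕ):ℝ)/(2*q) = (m:ℝ)/(2*q) + (1:ℕ) := by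
        push_cast; field_simp
      rw [this, nint_add_nat]
    rw [htop, hper, ← ih, hbot]; ring

lemma range_sum_close {q : ℕ} (hq : 1 ≤ q) (n : ℕ) :
    |(∑ i ∈ Finset.range n, nint ((i:ℝ) / (2*q))) - n/4| ≤ q := by
  induction n using Nat.strong_induction_on with
  | _ n ih =>
    rcases lt_or_ge n (2*q) with h | h
    · have h0 : 0 ≤ ∑ i ∈ Finset.range n, nint ((i:ℝ) / (2*q)) :=
        Finset.sum_nonneg fun i _ => nint_nonneg _
      have h1 : ∑ i ∈ Finset.range n, nint ((i:ℝ) / (2*q)) ≤ n * (1/2) := by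
        calc ∑ i ∈ Finset.range n, nint ((i:ℝ) / (2*q))
            ≤ ∑ i ∈ Finset.range n, (1/2 : ℝ) :=
              Finset.sum_le_sum fun i _ => nint_le_half _
          _ = n * (1/2) := by simp [mul_comm]
      have hn : (n:ℝ) < 2*q := by exact_mod_cast h
      rw [abs_le]; constructor <;> nlinarith
    · have key : ∑ i ∈ Finset.range n, nint ((i:ℝ) / (2*q))
          = (∑ i ∈ Finset.range (n - 2*q), nint ((i:ℝ) / (2*q))) + q/2 := by
        have h2 : n - 2*q + 2*q = n := by omega
        rw [← shift_period_sum hq (n - 2*q), h2, Finset.range_eq_Ico, Finset.range_eq_Ico,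
          Finset.sum_Ico_consecutive]
        · omega
        · omega
      have hlt : n - 2*q < n := by omega
      have := ih _ hlt
      have hcast : ((n - 2*q : ℕ):ℝ) = (n:ℝ) - 2*q := by
        have : (2*q:ℕ) ≤ n := h
        push_cast [Nat.cast_sub this]; ring
      rw [key]
      rw [hcast] at this
      calc |(∑ i ∈ Finset.range (n-2*q), nint ((i:ℝ)/(2*q))) + q/2 - n/4|
          = |(∑ i ∈ Finset.range (n-2*q), nint ((i:ℝ)/(2*q))) - ((n:ℝ)-2*q)/4| := by
            congr 1; ring
        _ ≤ q := this

lemma nint_div_le (i : ℕ) (s : ℕ) : nint ((i:ℝ)/2^s) ≤ (i:ℝ) * (1/2)^s := by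
  have := nint_le_self (x := (i:ℝ)/2^s) (by positivity)
  calc nint ((i:ℝ)/2^s) ≤ (i:ℝ)/2^s := this
    _ = (i:ℝ) * (1/2)^s := by rw [div_pow, one_pow]; ring

lemma summable_geo_mul (c : ℝ) : Summable (fun r : ℕ => c * (1/2)^r) := by
  have h : Summable (fun r : ℕ => (1/2:ℝ)^r) :=
    summable_geometric_of_lt_one (by norm_num) (by norm_num)
  exact h.mul_left c

lemma summable_nint (N : ℕ) : Summable (fun r : ℕ => nint ((N : ℝ) / 2 ^ (r + 1))) := by
  have hle : ∀ r : ℕ, nint ((N:ℝ)/2^(r+1)) ≤ ((N:ℝ)/2) * (1/2)^r := by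
    intro r
    calc nint ((N:ℝ)/2^(r+1)) ≤ (N:ℝ) * (1/2)^(r+1) := nint_div_le N (r+1)
      _ = ((N:ℝ)/2) * (1/2)^r := by rw [pow_succ]; ring
  exact Summable.of_nonneg_of_le (fun r => nint_nonneg _) hle (summable_geo_mul _)

/-- Béjian–Faure: `(1 / M) ∑_{N = 1}^{M} N D*_N(Y₂) = log M / (4 log 2) + O(1)`. -/
theorem vdc_star_discrepancy_average :
    ∃ C : ℝ, ∀ M : ℕ, 2 ≤ M →
      |(1 / (M : ℝ)) * (∑ N ∈ Finset.Icc 1 M, Dvdc N) - Real.log M / (4 * Real.log 2)| ≤ C := by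
  use 5
  intro M hM
  have hm2 : (2:ℝ) ≤ (M:ℝ) := by exact_mod_cast hM
  have hm0 : (0:ℝ) < (M:ℝ) := by linarith
  set L : ℕ := Nat.log 2 M with hL
  set R : ℕ := L + 1 with hR
  have hpowL : 2^L ≤ M := Nat.pow_log_le_self 2 (by omega)
  have hpowR : M < 2^R := Nat.lt_pow_succ_log_self (by omega) M
  have hRM : R ≤ M := by
    have := Nat.lt_two_pow_self (n := L)
    omega
  set S : ℕ → ℝ := fun r => ∑ i ∈ Finset.range (M+1), nint ((i:ℝ) / 2^(r+1)) with hS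
  have hSnonneg : ∀ r, 0 ≤ S r := fun r => Finset.sum_nonneg fun i _ => nint_nonneg _
  have hSle : ∀ r, S r ≤ (((M:ℝ)+1) * M / 2) * (1/2)^r := by
    intro r
    calc S r ≤ ∑ i ∈ Finset.range (M+1), (M:ℝ) * (1/2)^(r+1) := by
          apply Finset.sum_le_sum
          intro i hi
          have hiM : (i:ℝ) ≤ (M:ℝ) := by
            have : i ≤ M := Nat.lt_succ_iff.mp (Finset.mem_range.mp hi)
            exact_mod_cast this
          calc nint ((i:ℝ)/2^(r+1)) ≤ (i:ℝ) * (1/2)^(r+1) := nint_div_le i (r+1)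
            _ ≤ (M:ℝ) * (1/2)^(r+1) := mul_le_mul_of_nonneg_right hiM (by positivity)
      _ = (((M:ℝ)+1) * M / 2) * (1/2)^r := by
          rw [Finset.sum_const, Finset.card_range, pow_succ]
          push_cast; ring
  have hSsummable : Summable S :=
    Summable.of_nonneg_of_le hSnonneg hSle (summable_geo_mul _)
  -- swap sums
  have hswap : ∑ N ∈ Finset.Icc 1 M, Dvdc N = ∑' r, S r := by
    rw [show (∑ N ∈ Finset.Icc 1 M, Dvdc N)
        = ∑' r, ∑ N ∈ Finset.Icc 1 M, nint ((N:ℝ)/2^(r+1)) from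
      (Summable.tsum_finsetSum fun N _ => summable_nint N).symm]
    apply tsum_congr
    intro r
    rw [hS]
    simp only
    rw [Finset.range_eq_Ico, Finset.sum_eq_sum_Ico_succ_bot (by omega)]
    simp [nint_zero, Finset.Ico_add_one_right_eq_Icc]
  -- split
  have hsplit : ∑' r, S r = (∑ r ∈ Finset.range R, S r) + ∑' r, S (r + R) :=
    (Summable.sum_add_tsum_nat_add R hSsummable).symm
  -- head estimate
  have hhead : |(∑ r ∈ Finset.range R, S r) - (R:ℝ) * ((M:ℝ)+1) / 4| ≤ 2 * M := by
    have h1 : ∀ r : ℕ, |S r - ((M:ℝ)+1)/4| ≤ (2:ℝ)^r := by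
      intro r
      have key := range_sum_close (q := 2^r) (Nat.one_le_two_pow) (M+1)
      have hc : ((2^r : ℕ):ℝ) = 2^r := by push_cast; ring
      rw [hc] at key
      have heq : ∀ i : ℕ, (i:ℝ) / (2 * (2:ℝ)^r) = (i:ℝ)/2^(r+1) := by
        intro i
        rw [show (2:ℝ) * (2:ℝ)^r = 2^(r+1) from by rw [pow_succ]; ring]
      have hsum_eq : (∑ i ∈ Finset.range (M+1), nint ((i:ℝ)/(2*(2:ℝ)^r))) = S r := by
        rw [hS]
        exact Finset.sum_congr rfl fun i _ => by rw [heq i]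
      rw [← hsum_eq]
      push_cast at key
      exact key
    calc |(∑ r ∈ Finset.range R, S r) - (R:ℝ) * ((M:ℝ)+1) / 4|
        = |∑ r ∈ Finset.range R, (S r - ((M:ℝ)+1)/4)| := by
          rw [Finset.sum_sub_distrib, Finset.sum_const, Finset.card_range]
          congr 2
          push_cast; ring
      _ ≤ ∑ r ∈ Finset.range R, |S r - ((M:ℝ)+1)/4| := Finset.abs_sum_le_sum_abs _ _
      _ ≤ ∑ r ∈ Finset.range R, (2:ℝ)^r := Finset.sum_le_sum fun r _ => h1 r
      _ = 2^R - 1 := by rw [geom_sum_eq (by norm_num)]; norm_num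
      _ ≤ 2 * M := by
          have h2 : ((2:ℝ))^L ≤ (M:ℝ) := by exact_mod_cast hpowL
          have : (2:ℝ)^R = 2 * 2^L := by rw [hR, pow_succ]; ring
          nlinarith
  -- tail
  have htail0 : 0 ≤ ∑' r, S (r + R) := tsum_nonneg fun r => hSnonneg _
  have htail : ∑' r, S (r + R) ≤ 2 * M := by
    have hb : ∀ r, S (r + R) ≤ ((((M:ℝ)+1) * M / 2^(R+1))) * (1/2)^r := by
      intro r
      calc S (r+R) ≤ (((M:ℝ)+1) * M / 2) * (1/2)^(r+R) := hSle _
        _ = ((((M:ℝ)+1) * M / 2^(R+1))) * (1/2)^r := by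
            rw [pow_add, div_pow, div_pow, one_pow, one_pow, pow_succ]
            field_simp
            ring
    calc ∑' r, S (r + R) ≤ ∑' r, ((((M:ℝ)+1) * M / 2^(R+1))) * (1/2)^r :=
          Summable.tsum_le_tsum hb (hSsummable.comp_injective (add_left_injective R))
            (summable_geo_mul _)
      _ = ((((M:ℝ)+1) * M / 2^(R+1))) * (1 - 1/2)⁻¹ := by
          rw [tsum_mul_left, tsum_geometric_of_lt_one (by norm_num) (by norm_num)]
      _ ≤ 2 * M := by
          have h2 : (M:ℝ) < (2:ℝ)^R := by exact_mod_cast hpowR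
          have hp : (0:ℝ) < (2:ℝ)^R := by positivity
          rw [show ((1:ℝ) - 1/2)⁻¹ = 2 from by norm_num, pow_succ]
          rw [div_mul_eq_mul_div, mul_comm]
          rw [div_le_iff₀ (by positivity)]
          nlinarith
  -- log estimates
  have hlog2 : (0:ℝ) < Real.log 2 := Real.log_pos (by norm_num)
  have hloglo : (L:ℝ) * Real.log 2 ≤ Real.log M := by
    have h := Real.log_le_log (by positivity : (0:ℝ) < (2:ℝ)^L)
      (by exact_mod_cast hpowL : ((2:ℝ))^L ≤ (M:ℝ))
    rwa [Real.log_pow] at h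
  have hloghi : Real.log M ≤ (R:ℝ) * Real.log 2 := by
    have h := Real.log_le_log hm0
      (by exact_mod_cast hpowR.le : (M:ℝ) ≤ (2:ℝ)^R)
    rwa [Real.log_pow] at h
  -- total
  have htotal : |(∑ N ∈ Finset.Icc 1 M, Dvdc N) - (R:ℝ) * ((M:ℝ)+1) / 4| ≤ 4 * M := by
    rw [hswap, hsplit]
    calc |(∑ r ∈ Finset.range R, S r) + (∑' r, S (r + R)) - (R:ℝ)*((M:ℝ)+1)/4|
        = |((∑ r ∈ Finset.range R, S r) - (R:ℝ)*((M:ℝ)+1)/4) + (∑' r, S (r+R))| := by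
          rw [add_sub_right_comm]
      _ ≤ |(∑ r ∈ Finset.range R, S r) - (R:ℝ)*((M:ℝ)+1)/4| + |∑' r, S (r+R)| := abs_add_le _ _
      _ ≤ 2*M + 2*M := add_le_add hhead (by rw [abs_of_nonneg htail0]; exact htail)
      _ = 4*M := by ring
  -- final assembly
  have hRm : (R:ℝ) ≤ (M:ℝ) := by exact_mod_cast hRM
  have hR1 : (1:ℝ) ≤ (R:ℝ) := by exact_mod_cast (by omega : 1 ≤ R)
  set Tt : ℝ := ∑ N ∈ Finset.Icc 1 M, Dvdc N with hTt
  set D : ℝ := Real.log M / (4 * Real.log 2) with hD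
  have hdecomp : (1/(M:ℝ)) * Tt - D
      = (1/(M:ℝ)) * (Tt - (R:ℝ)*((M:ℝ)+1)/4) + (R:ℝ)/(4*(M:ℝ)) + ((R:ℝ)/4 - D) := by
    field_simp
    ring
  have hp1 : |(1/(M:ℝ)) * (Tt - (R:ℝ)*((M:ℝ)+1)/4)| ≤ 4 := by
    rw [abs_mul, abs_of_nonneg (by positivity : (0:ℝ) ≤ 1/(M:ℝ))]
    calc (1/(M:ℝ)) * |Tt - (R:ℝ)*((M:ℝ)+1)/4| ≤ (1/(M:ℝ)) * (4*M) := by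
          apply mul_le_mul_of_nonneg_left htotal (by positivity)
      _ = 4 := by field_simp
  have hp2 : |(R:ℝ)/(4*(M:ℝ))| ≤ 1/4 := by
    rw [abs_of_nonneg (by positivity)]
    rw [div_le_div_iff₀ (by positivity) (by norm_num)]
    nlinarith
  have hp3 : |(R:ℝ)/4 - D| ≤ 1/4 := by
    rw [hD, abs_le]
    constructor
    · rw [neg_le, neg_sub, sub_le_iff_le_add, div_le_iff₀ (by positivity)]
      nlinarith
    · rw [sub_le_iff_le_add, ← sub_le_iff_le_add', ← sub_div, le_div_iff₀ (by positivity)]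
      have hLR : (R:ℝ) - 1 = (L:ℝ) := by rw [hR]; push_cast; ring
      nlinarith
  calc |(1/(M:ℝ)) * Tt - D|
      = |((1/(M:ℝ)) * (Tt - (R:ℝ)*((M:ℝ)+1)/4) + (R:ℝ)/(4*(M:ℝ))) + ((R:ℝ)/4 - D)| := by
        rw [hdecomp]
    _ ≤ |(1/(M:ℝ)) * (Tt - (R:ℝ)*((M:ℝ)+1)/4) + (R:ℝ)/(4*(M:ℝ))| + |(R:ℝ)/4 - D| := abs_add_le _ _
    _ ≤ (|(1/(M:ℝ)) * (Tt - (R:ℝ)*((M:ℝ)+1)/4)| + |(R:ℝ)/(4*(M:ℝ))|) + |(R:ℝ)/4 - D| := by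
        exact add_le_add_left (abs_add_le _ _) _
    _ ≤ (4 + 1/4) + 1/4 := by
        exact add_le_add (add_le_add hp1 hp2) hp3
    _ ≤ 5 := by norm_num
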